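/- arXiv:1612.02587 — 2 statements merged into one kernel-verified Lean document; each statement's English description precedes it below -/
import Mathlib

section
/- In a separative valuation algebra with units or strong combination, if d(ψ) = y ≤ x ≤ d(φ), then the conditional of the product π_x(φ)·ψ satisfies (π_x(φ)·ψ)_{x|y} = φ_{x|y}·f_ψ, where f_ψ is the group unit of ψ. -/
/-- A commutative semigroup which is a (disjoint) union of groups:
`e a` is the unit of the group containing `a`, `inv a` its inverse there. -/
structure UnionOfGroups (G : Type*) [CommSemigroup G] where
  e : G → G
  inv : G → G
  e_idem : ∀ a, e a * e a = e a
  mul_unit : ∀ a, a * e a = a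
  mul_inv : ∀ a, a * inv a = e a

/-- A separative valuation algebra `Psi` together with its embedding extension
semigroup `P = Ψ⁰`, a union of disjoint groups.  `e a` is the unit of the group
`δ(a)` containing `a`, `inv a` the group inverse, `d` the labeling, `p` the
projection (total on `Psi` for `x ≤ d a`).  Axioms A1-A5 (with the strong
combination axiom A5') and the separativity conditions S1, S2 are recorded. -/
structure SVA (P : Type*) (D : Type*) [CommSemigroup P] [Lattice D] where
  e : P → P
  inv : P → P
  e_idem : ∀ a, e a * e a = e a
  mul_unit : ∀ a, a * e a = a
  mul_inv : ∀ a, a * inv a = e a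
  e_mul : ∀ a b, e (a * b) = e a * e b
  e_inv : ∀ a, e (inv a) = e a
  d : P → D
  d_mul : ∀ a b, d (a * b) = d a ⊔ d b
  d_inv : ∀ a, d (inv a) = d a
  Psi : Set P
  Psi_mul : ∀ {a b}, a ∈ Psi → b ∈ Psi → a * b ∈ Psi
  p : P → D → P
  p_mem : ∀ {a} (x : D), a ∈ Psi → x ≤ d a → p a x ∈ Psi
  d_p : ∀ {a} (x : D), a ∈ Psi → x ≤ d a → d (p a x) = x
  p_self : ∀ {a}, a ∈ Psi → p a (d a) = a
  p_trans : ∀ {a} (x y : D), a ∈ Psi → x ≤ y → y ≤ d a → p (p a y) x = p a x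
  strong_comb : ∀ {a b} (z : D), a ∈ Psi → b ∈ Psi → d a ≤ z → z ≤ d a ⊔ d b →
    p (a * b) z = a * p b (z ⊓ d b)
  sep : ∀ {a} (x : D), a ∈ Psi → x ≤ d a → e (a * p a x) = e a

namespace SVA

variable {P : Type*} {D : Type*} [CommSemigroup P] [Lattice D]

/-- The domination order between the groups: `δ(a) ≤ δ(b)` iff `f_a · f_b = f_b`. -/
def domLe (V : SVA P D) (a b : P) : Prop := V.e a * V.e b = V.e b

/-- `π_x(η)` exists for `η ∈ Ψ⁰`: `η = φ·ψ⁻¹` with `φ, ψ ∈ Ψ`,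
`d(ψ) ≤ x ≤ d(φ)` and `δ(ψ) ≤ δ(φ)`. -/
def extProjDef (V : SVA P D) (η : P) (x : D) : Prop :=
  ∃ φ ψ, φ ∈ V.Psi ∧ ψ ∈ V.Psi ∧ η = φ * V.inv ψ ∧
    V.d ψ ≤ x ∧ x ≤ V.d φ ∧ V.domLe ψ φ

/-- The partially defined extension of projection to `Ψ⁰`:
`π_x(φ·ψ⁻¹) = π_x(φ)·ψ⁻¹`. -/
noncomputable def extProj (V : SVA P D) (η : P) (x : D) : P :=
  letI := Classical.propDecidable (V.extProjDef η x)
  if h : V.extProjDef η x then V.p h.choose x * V.inv h.choose_spec.choose else η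

/-- The conditional `φ_{x|y} = π_x(φ)·(π_y(φ))⁻¹`. -/
def condit (V : SVA P D) (φ : P) (x y : D) : P := V.p φ x * V.inv (V.p φ y)

/-- The compositional operator `φ ▷ ψ = φ·ψ·(π_{x∧y}(ψ))⁻¹`. -/
noncomputable def comp (V : SVA P D) (φ ψ : P) : P :=
  φ * ψ * V.inv (V.extProj ψ (V.d φ ⊓ V.d ψ))

/-- An abstract density: all projections `π_z(η)`, `z ≤ d(η)`, exist. -/
def AbsDensity (V : SVA P D) (η : P) : Prop := ∀ z, z ≤ V.d η → V.extProjDef η z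

end SVA

variable {P : Type*} {D : Type*} [CommSemigroup P] [Lattice D]

namespace SVA

variable (V : SVA P D)

theorem inv_unique {a u : P} (h1 : a * u = V.e a) (h2 : V.e u = V.e a) : u = V.inv a :=
  calc u = u * V.e a := by rw [← h2, V.mul_unit]
    _ = (a * u) * V.inv a := by rw [← V.mul_inv, ← mul_assoc, mul_comm u a]
    _ = V.inv a := by rw [h1, mul_comm, ← V.e_inv, V.mul_unit]

theorem inv_mul (a b : P) : V.inv (a * b) = V.inv a * V.inv b :=
  (V.inv_unique (by rw [mul_mul_mul_comm, V.mul_inv, V.mul_inv, ← V.e_mul])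
    (by rw [V.e_mul, V.e_inv, V.e_inv, V.e_mul])).symm

theorem mul_mul_inv_mul (a b c : P) : a * b * V.inv (b * c) = a * V.inv c * V.e b := by
  rw [V.inv_mul, mul_comm (V.inv b), mul_mul_mul_comm, V.mul_inv]

theorem p_mul_of_d_le {a b : P} (ha : a ∈ V.Psi) (hb : b ∈ V.Psi) (h : V.d b ≤ V.d a) :
    V.p (a * b) (V.d a) = a * b := by
  have hd : V.d (a * b) = V.d a := by rw [V.d_mul, sup_eq_left.2 h]
  rw [← hd, V.p_self (V.Psi_mul ha hb)]

theorem p_mul_d_left {a b : P} (ha : a ∈ V.Psi) (hb : b ∈ V.Psi) :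
    V.p (a * b) (V.d a) = a * V.p b (V.d a ⊓ V.d b) :=
  V.strong_comb _ ha hb le_rfl le_sup_left

end SVA

/-- If `d(ψ) = y ≤ x ≤ d(φ)`, then `(π_x(φ)·ψ)_{x|y} = φ_{x|y}·f_ψ`. -/
theorem SVA.conditional_of_product (V : SVA P D) {φ ψ : P} {x y : D}
    (hφ : φ ∈ V.Psi) (hψ : ψ ∈ V.Psi) (hd : V.d ψ = y)
    (hyx : y ≤ x) (hx : x ≤ V.d φ) :
    V.condit (V.p φ x * ψ) x y = V.condit φ x y * V.e ψ := by
  subst hd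
  have hpx : V.p φ x ∈ V.Psi := V.p_mem x hφ hx
  have hdx : V.d (V.p φ x) = x := V.d_p x hφ hx
  have top : V.p (V.p φ x * ψ) x = V.p φ x * ψ := by
    have := V.p_mul_of_d_le hpx hψ (by rwa [hdx])
    rwa [hdx] at this
  have bottom : V.p (V.p φ x * ψ) (V.d ψ) = ψ * V.p φ (V.d ψ) := by
    rw [mul_comm, V.p_mul_d_left hψ hpx, hdx, inf_eq_left.2 hyx, V.p_trans _ _ hφ hyx hx]
  rw [condit, condit, top, bottom, V.mul_mul_inv_mul]
end

section
/- In a separative valuation algebra over a modular lattice, if π_{x∧y}(φ) = π_{x∧y}(ψ) for abstract densities φ,ψ with d(φ)=x, d(ψ)=y, then composition is commutative: φ ▷ ψ = ψ ▷ φ. Conversely, in a cancellative valuation algebra, φ ▷ ψ = ψ ▷ φ implies π_{x∧y}(φ) = π_{x∧y}(ψ). -/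
variable {P : Type*} {D : Type*} [CommSemigroup P] [Lattice D]

/-! Both compositions contain the common factor `φ·ψ` and differ only in the inverted projection
`π_{x∧y}(ψ)⁻¹` versus `π_{x∧y}(φ)⁻¹`, so equal projections give commutativity. Conversely,
cancellation of `φ·ψ` makes the two inverses equal; the two domination hypotheses put both
projections in the same group, where an element is determined by its inverse. -/

namespace SVA

variable (V : SVA P D)

def Cancellative : Prop := ∀ a b c : P, V.d b = V.d c → a * b = a * c → b = c

lemma inv_mul_self (a : P) : V.inv a * a = V.e a := by
  rw [mul_comm]
  exact V.mul_inv a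

lemma e_eq_of_domLe_of_domLe {a b : P} (hab : V.domLe a b) (hba : V.domLe b a) :
    V.e a = V.e b :=
  calc V.e a = V.e b * V.e a := hba.symm
    _ = V.e a * V.e b := mul_comm _ _
    _ = V.e b := hab

lemma Cancellative.eq_of_inv_eq {V : SVA P D} (hV : V.Cancellative) {a b : P}
    (hd : V.d a = V.d b) (he : V.e a = V.e b) (hinv : V.inv a = V.inv b) : a = b :=
  hV (V.inv b) a b hd <| by rw [← hinv, inv_mul_self, he, hinv, inv_mul_self]

lemma d_extProj {η : P} {x : D} (h : V.extProjDef η x) : V.d (V.extProj η x) = x := by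
  obtain ⟨hmem, -, -, hle, hle', -⟩ := h.choose_spec.choose_spec
  rw [extProj, dif_pos h, V.d_mul, V.d_inv, V.d_p x hmem hle', sup_eq_left]
  exact hle

lemma comp_swap (φ ψ : P) :
    V.comp ψ φ = φ * ψ * V.inv (V.extProj φ (V.d φ ⊓ V.d ψ)) := by
  rw [comp, inf_comm, mul_comm ψ φ]

end SVA

theorem SVA.comp_comm_iff_consistent_general (V : SVA P D) {φ ψ : P}
    (hφ : V.AbsDensity φ) (hψ : V.AbsDensity ψ)
    (hdom : V.domLe (V.extProj ψ (V.d φ ⊓ V.d ψ)) (V.extProj φ (V.d φ ⊓ V.d ψ))) :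
    (V.extProj φ (V.d φ ⊓ V.d ψ) = V.extProj ψ (V.d φ ⊓ V.d ψ) →
      V.comp φ ψ = V.comp ψ φ) ∧
    ((∀ a b c : P, V.d b = V.d c → a * b = a * c → b = c) →
      V.domLe (V.extProj φ (V.d φ ⊓ V.d ψ)) (V.extProj ψ (V.d φ ⊓ V.d ψ)) →
      V.comp φ ψ = V.comp ψ φ →
      V.extProj φ (V.d φ ⊓ V.d ψ) = V.extProj ψ (V.d φ ⊓ V.d ψ)) := by
  refine ⟨fun h => by rw [comp, comp_swap, h], fun hV hdom' hcomm => ?_⟩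
  have hdφ := V.d_extProj (hφ (V.d φ ⊓ V.d ψ) inf_le_left)
  have hdψ := V.d_extProj (hψ (V.d φ ⊓ V.d ψ) inf_le_right)
  have hinv : V.inv (V.extProj ψ (V.d φ ⊓ V.d ψ)) = V.inv (V.extProj φ (V.d φ ⊓ V.d ψ)) :=
    hV (φ * ψ) _ _ (by rw [d_inv, d_inv, hdφ, hdψ]) (by rwa [comp, comp_swap] at hcomm)
  exact Cancellative.eq_of_inv_eq hV (hdφ.trans hdψ.symm)
    (V.e_eq_of_domLe_of_domLe hdom' hdom) hinv.symm

/-- Over a modular lattice, if `π_{x∧y}(φ) = π_{x∧y}(ψ)` then composition is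
commutative: `φ ▷ ψ = ψ ▷ φ`; conversely, in a cancellative valuation algebra,
`φ ▷ ψ = ψ ▷ φ` implies `π_{x∧y}(φ) = π_{x∧y}(ψ)`. -/
theorem SVA.comp_comm_iff_consistent [IsModularLattice D] (V : SVA P D) {φ ψ : P}
    (hφ : V.AbsDensity φ) (hψ : V.AbsDensity ψ)
    (hdom : V.domLe (V.extProj ψ (V.d φ ⊓ V.d ψ)) (V.extProj φ (V.d φ ⊓ V.d ψ))) :
    (V.extProj φ (V.d φ ⊓ V.d ψ) = V.extProj ψ (V.d φ ⊓ V.d ψ) →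
      V.comp φ ψ = V.comp ψ φ) ∧
    ((∀ a b c : P, V.d b = V.d c → a * b = a * c → b = c) →
      V.domLe (V.extProj φ (V.d φ ⊓ V.d ψ)) (V.extProj ψ (V.d φ ⊓ V.d ψ)) →
      V.comp φ ψ = V.comp ψ φ →
      V.extProj φ (V.d φ ⊓ V.d ψ) = V.extProj ψ (V.d φ ⊓ V.d ψ)) :=
  SVA.comp_comm_iff_consistent_general V hφ hψ hdom
end
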